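/- arXiv:2203.06484 — 2 statements merged into one kernel-verified Lean document; each statement's English description precedes it below -/
import Mathlib

section
/- Let λ ∈ ℂ with λ ∉ a(𝕋), and let v ∈ ℓ² satisfy T(a)v = λv. Then v decays exponentially: there exist a constant C > 0 and a real number r with 0 < r < 1 such that |v_i| ≤ C r^i for all i ≥ 1. -/
/-!
Reading row `i + m` of `T(a) v = λ v` shows that `v` satisfies the linear recurrence with
characteristic polynomial `b_λ(z) = z^m (a(z) - λ)`: `b_λ(S) v = 0` for the left shift `S`.
Over `ℂ`, `b_λ` splits into factors `S - z`, and `|z| ≠ 1` for each root because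
`λ ∉ a(𝕋)`. The factors are peeled off one at a time: if `u = (S - z) w` decays exponentially,
so does `w`. When `|z| < 1` this is forward induction along `w_{i+1} = z w_i + u_i`; when
`|z| > 1` one runs the recurrence backwards, bounding `w_i` by `w_{i+N}` plus a geometric tail
of `u`, and lets `N → ∞`, which needs `w → 0` (true for every sequence in `ℓ²`).
-/

open scoped ENNReal

noncomputable section

/-- The polynomial `b_λ(z) = z^m (a(z) - λ) = ∑_{k=0}^{m+n} a_{k-m} z^k - λ z^m`. -/
def bpoly (m n : ℕ) (a : ℤ → ℂ) (lam : ℂ) : Polynomial ℂ :=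
  (∑ k ∈ Finset.range (m + n + 1), Polynomial.C (a ((k : ℤ) - (m : ℤ))) * Polynomial.X ^ k)
    - Polynomial.C lam * Polynomial.X ^ m

/-- `p(λ)`: the number of roots of `b_λ` in the open unit disk, counted with multiplicity. -/
def rootCount (m n : ℕ) (a : ℤ → ℂ) (lam : ℂ) : ℕ :=
  Multiset.card ((bpoly m n a lam).roots.filter fun z => ‖z‖ < 1)

/-- The value `a(z) = ∑_{k=-m}^{n} a_k z^k` of the Laurent polynomial. -/
def aval (m n : ℕ) (a : ℤ → ℂ) (z : ℂ) : ℂ :=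
  ∑ k ∈ Finset.Icc (-(m : ℤ)) (n : ℤ), a k * z ^ k

/-- The image `a(𝕋)` of the unit circle under the Laurent polynomial `a`. -/
def aCircle (m n : ℕ) (a : ℤ → ℂ) : Set ℂ :=
  {w : ℂ | ∃ z : ℂ, ‖z‖ = 1 ∧ aval m n a z = w}

/-- The Hilbert space `ℓ²` of square-summable complex sequences (0-indexed). -/
abbrev ell2 := lp (fun _ : ℕ => ℂ) 2

open Polynomial Filter Topology

lemma Memℓp.tendsto_cofinite_zero {ι E : Type*} [NormedAddCommGroup E] {p : ℝ≥0∞}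
    {f : ι → E} (hp : 0 < p.toReal) (hf : Memℓp f p) : Tendsto f cofinite (𝓝 0) := by
  rw [tendsto_zero_iff_norm_tendsto_zero]
  have h := (hf.summable hp).tendsto_cofinite_zero.rpow_const (p := p.toReal⁻¹)
    (.inr (inv_nonneg.mpr hp.le))
  rwa [Real.zero_rpow (inv_ne_zero hp.ne'),
    funext fun i => Real.rpow_rpow_inv (norm_nonneg (f i)) hp.ne'] at h

section Shift

variable (R M : Type*)

def seqShift [CommSemiring R] [AddCommMonoid M] [Module R M] : Module.End R (ℕ → M) :=
  LinearMap.funLeft R M (· + 1)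

variable {R M}

lemma seqShift_apply [CommSemiring R] [AddCommMonoid M] [Module R M] (w : ℕ → M) (i : ℕ) :
    seqShift R M w i = w (i + 1) :=
  rfl

lemma seqShift_pow_apply [CommSemiring R] [AddCommMonoid M] [Module R M]
    (k : ℕ) (w : ℕ → M) (i : ℕ) : (seqShift R M ^ k) w i = w (i + k) := by
  induction k generalizing w with
  | zero => rfl
  | succ k ih => rw [pow_succ, Module.End.mul_apply, ih, seqShift_apply, add_assoc]

lemma aeval_seqShift_X_sub_C_apply [CommRing R] [AddCommGroup M] [Module R M]
    (z : R) (w : ℕ → M) (i : ℕ) :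
    aeval (seqShift R M) (X - C z) w i = w (i + 1) - z • w i := by
  simp only [aeval_sub, aeval_X, aeval_C, LinearMap.sub_apply, Module.algebraMap_end_apply,
    Pi.sub_apply, Pi.smul_apply, seqShift_apply]

end Shift

def DecaysExponentially {E : Type*} [Norm E] (w : ℕ → E) : Prop :=
  ∃ C > 0, ∃ r, 0 < r ∧ r < 1 ∧ ∀ i, ‖w i‖ ≤ C * r ^ i

namespace DecaysExponentially

variable {𝕜 E : Type*} [NormedField 𝕜] [NormedAddCommGroup E] [NormedSpace 𝕜 E]

lemma of_sub_smul_of_norm_lt_one {w : ℕ → E} {z : 𝕜} (hz : ‖z‖ < 1)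
    (hu : DecaysExponentially fun i => w (i + 1) - z • w i) : DecaysExponentially w := by
  obtain ⟨Cu, hCu, r, hr0, hr1, hbd⟩ := hu
  -- any rate `s ∈ (max ‖z‖ r, 1)` works, with `C` large enough that `Cu ≤ C * (s - ‖z‖)`
  set s := (max ‖z‖ r + 1) / 2
  have hzs : ‖z‖ < s := by grind
  have hrs : r ≤ s := by grind
  have hs0 : 0 < s := hr0.trans_le hrs
  set C := max ‖w 0‖ (Cu / (s - ‖z‖))
  have hCu_le : Cu ≤ C * (s - ‖z‖) := (div_le_iff₀ (by linarith)).mp (le_max_right _ _)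
  refine ⟨C, lt_max_of_lt_right (by positivity), s, hs0, by grind, fun i => ?_⟩
  induction i with
  | zero => simp [C]
  | succ i ih =>
    have hstep : ‖w (i + 1)‖ ≤ ‖z‖ * ‖w i‖ + ‖w (i + 1) - z • w i‖ := by
      simpa [norm_smul] using norm_le_norm_add_norm_sub' (w (i + 1)) (z • w i)
    calc ‖w (i + 1)‖ ≤ ‖z‖ * (C * s ^ i) + Cu * s ^ i :=
          hstep.trans (by gcongr; exact (hbd i).trans (by gcongr))
      _ ≤ ‖z‖ * (C * s ^ i) + C * (s - ‖z‖) * s ^ i := by gcongr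
      _ = C * s ^ (i + 1) := by ring

lemma of_sub_smul_of_one_lt_norm {w : ℕ → E} {z : 𝕜} (hz : 1 < ‖z‖)
    (hw : Tendsto w atTop (𝓝 0)) (hu : DecaysExponentially fun i => w (i + 1) - z • w i) :
    DecaysExponentially w := by
  obtain ⟨Cu, hCu, r, hr0, hr1, hbd⟩ := hu
  beta_reduce at hbd
  -- `Cu + K = ‖z‖ * K` is what lets the bound below propagate from `i + 1` back to `i`
  set K := Cu / (‖z‖ - 1)
  have hK : K * (‖z‖ - 1) = Cu := div_mul_cancel₀ _ (sub_pos.mpr hz).ne'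
  have hbound : ∀ N i, ‖w i‖ ≤ ‖w (N + i)‖ + K * r ^ i := by
    intro N
    induction N with
    | zero => intro i; rw [zero_add]; exact le_add_of_nonneg_right (by positivity)
    | succ N ih =>
      intro i
      have hstep : ‖z‖ * ‖w i‖ ≤ ‖w (i + 1)‖ + ‖w (i + 1) - z • w i‖ := by
        simpa [norm_smul] using norm_le_norm_add_norm_sub (w (i + 1)) (z • w i)
      have hr : K * r ^ (i + 1) ≤ K * r ^ i :=
        mul_le_mul_of_nonneg_left (pow_le_pow_of_le_one hr0.le hr1.le i.le_succ) (by positivity)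
      have hnext := ih (i + 1)
      rw [show N + (i + 1) = N + 1 + i by omega] at hnext
      have hK' : ‖z‖ * (K * r ^ i) = K * r ^ i + Cu * r ^ i := by
        linear_combination r ^ i * hK
      have key : ‖z‖ * (‖w i‖ - K * r ^ i) ≤ ‖w (N + 1 + i)‖ := by
        linarith [hbd i]
      nlinarith [mul_nonneg (sub_nonneg.mpr hz.le) (norm_nonneg (w (N + 1 + i)))]
  refine ⟨K, by positivity, r, hr0, hr1, fun i => ?_⟩
  have hlim : Tendsto (fun N => ‖w (N + i)‖ + K * r ^ i) atTop (𝓝 (0 + K * r ^ i)) :=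
    ((tendsto_zero_iff_norm_tendsto_zero.mp hw).comp (tendsto_add_atTop_nat i)).add_const _
  simpa using ge_of_tendsto' hlim fun N => hbound N i

lemma of_aeval_seqShift_prod_eq_zero (s : Multiset 𝕜) (hs : ∀ z ∈ s, ‖z‖ ≠ 1)
    {w : ℕ → E} (hw : Tendsto w atTop (𝓝 0))
    (h : aeval (seqShift 𝕜 E) (s.map (X - C ·)).prod w = 0) : DecaysExponentially w := by
  induction s using Multiset.induction_on generalizing w with
  | empty =>
    have hw0 : w = 0 := by simpa using h
    exact ⟨1, one_pos, 1 / 2, by norm_num, by norm_num, fun i => by simp [hw0]⟩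
  | cons z s ih =>
    have hu_eq : aeval (seqShift 𝕜 E) (X - C z) w = fun i => w (i + 1) - z • w i :=
      funext (aeval_seqShift_X_sub_C_apply z w)
    have hu_lim : Tendsto (fun i => w (i + 1) - z • w i) atTop (𝓝 0) := by
      simpa using (hw.comp (tendsto_add_atTop_nat 1)).sub (hw.const_smul z)
    have hu : DecaysExponentially fun i => w (i + 1) - z • w i := by
      refine ih (fun z' hz' => hs z' (Multiset.mem_cons_of_mem hz')) hu_lim ?_
      rwa [Multiset.map_cons, Multiset.prod_cons, mul_comm, map_mul, Module.End.mul_apply,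
        hu_eq] at h
    rcases (hs z (Multiset.mem_cons_self z s)).lt_or_gt with hz | hz
    · exact .of_sub_smul_of_norm_lt_one hz hu
    · exact .of_sub_smul_of_one_lt_norm hz hw hu

end DecaysExponentially

lemma aeval_prod_roots_eq_zero {K M : Type*} [Field K] [IsAlgClosed K] [AddCommGroup M]
    [Module K M] {p : K[X]} (hp : p ≠ 0) {f : Module.End K M} {x : M} (h : aeval f p x = 0) :
    aeval f (p.roots.map (X - C ·)).prod x = 0 := by
  rw [(IsAlgClosed.splits p).eq_prod_roots, map_mul, aeval_C, Module.End.mul_apply,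
    Module.algebraMap_end_apply, smul_eq_zero] at h
  exact h.resolve_left (leadingCoeff_ne_zero.mpr hp)

section Bpoly

variable {m n : ℕ} {a : ℤ → ℂ} {lam : ℂ}

lemma bpoly_coeff_add (hn : 1 ≤ n) : (bpoly m n a lam).coeff (m + n) = a n := by
  simp only [bpoly, coeff_sub, finsetSum_coeff, coeff_C_mul, coeff_X_pow, mul_ite, mul_one,
    mul_zero]
  simp [show n ≠ 0 by omega]

lemma bpoly_ne_zero (hn : 1 ≤ n) (han : a n ≠ 0) : bpoly m n a lam ≠ 0 := by
  intro h
  exact han (by rw [← bpoly_coeff_add (m := m) (a := a) (lam := lam) hn, h, coeff_zero])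

lemma bpoly_eval {z : ℂ} (hz : z ≠ 0) :
    (bpoly m n a lam).eval z = z ^ m * (aval m n a z - lam) := by
  have hsum : z ^ m * aval m n a z = ∑ k ∈ Finset.range (m + n + 1), a (k - m) * z ^ k := by
    rw [aval, Finset.mul_sum]
    refine Finset.sum_nbij' (fun k => (k + m).toNat) (fun t => (t : ℤ) - m) ?_ ?_ ?_ ?_ ?_
    all_goals intro k hk; simp only [Finset.mem_Icc, Finset.mem_range] at hk ⊢
    any_goals omega
    obtain ⟨t, rfl⟩ : ∃ t : ℕ, k = (t : ℤ) - m := ⟨(k + m).toNat, by omega⟩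
    rw [sub_add_cancel, Int.toNat_natCast, zpow_sub₀ hz, zpow_natCast, zpow_natCast]
    field_simp
  rw [bpoly, eval_sub, eval_finsetSum]
  simp only [eval_mul, eval_C, eval_pow, eval_X]
  rw [← hsum]
  ring

lemma norm_ne_one_of_mem_roots_bpoly (hlam : lam ∉ aCircle m n a) {z : ℂ}
    (hz : z ∈ (bpoly m n a lam).roots) : ‖z‖ ≠ 1 := by
  intro hz1
  have hz0 : z ≠ 0 := by rintro rfl; simp at hz1
  have hroot := (mem_roots'.mp hz).2
  rw [IsRoot, bpoly_eval hz0, mul_eq_zero, sub_eq_zero] at hroot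
  exact hlam ⟨z, hz1, hroot.resolve_left (pow_ne_zero m hz0)⟩

lemma aeval_seqShift_bpoly_eq_zero (hsupp : ∀ k < -(m : ℤ), a k = 0) {w : ℕ → ℂ}
    (hw : ∀ i, ∑ j ∈ Finset.range (i + n + 1), a ((j : ℤ) - i) * w j = lam * w i) :
    aeval (seqShift ℂ ℂ) (bpoly m n a lam) w = 0 := by
  funext i
  have hrow : ∑ k ∈ Finset.range (m + n + 1), a ((k : ℤ) - m) * w (i + k) = lam * w (i + m) := by
    have hlow : ∑ j ∈ Finset.range i, a ((j : ℤ) - (i + m : ℕ)) * w j = 0 :=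
      Finset.sum_eq_zero fun j hj => by
        rw [hsupp _ (by simp only [Finset.mem_range] at hj; omega), zero_mul]
    rw [← hw (i + m), show i + m + n + 1 = i + (m + n + 1) by omega,
      Finset.sum_range_add _ i (m + n + 1), hlow, zero_add]
    refine Finset.sum_congr rfl fun k _ => ?_
    congr 2
    push_cast
    ring
  simp only [bpoly, map_sub, map_sum, map_mul, aeval_C, map_pow, aeval_X, LinearMap.sub_apply,
    LinearMap.coe_sum, Finset.sum_apply, Module.End.mul_apply, Module.algebraMap_end_apply,
    Pi.sub_apply, Pi.smul_apply, smul_eq_mul, seqShift_pow_apply, Pi.zero_apply]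
  rw [hrow, sub_self]

end Bpoly

/-- Entry `i : ℕ` of `v` is the paper's `v_{i+1}`, hence the exponent `i + 1`. -/
theorem stmt_5_general (m n : ℕ) (hn : 1 ≤ n) (a : ℤ → ℂ)
    (han : a (n : ℤ) ≠ 0)
    (hsupp : ∀ k : ℤ, (k < -(m : ℤ) ∨ (n : ℤ) < k) → a k = 0)
    (T : ell2 →L[ℂ] ell2)
    (hT : ∀ (v : ell2) (i : ℕ),
      (T v) i = ∑ j ∈ Finset.range (i + n + 1), a ((j : ℤ) - (i : ℤ)) * v j)
    (lam : ℂ) (hlam : lam ∉ aCircle m n a)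
    (v : ell2) (hv : T v = lam • v) :
    ∃ C : ℝ, 0 < C ∧ ∃ r : ℝ, 0 < r ∧ r < 1 ∧
      ∀ i : ℕ, ‖v i‖ ≤ C * r ^ (i + 1) := by
  have hrec : aeval (seqShift ℂ ℂ) (bpoly m n a lam) v = 0 :=
    aeval_seqShift_bpoly_eq_zero (fun k hk => hsupp k (.inl hk)) fun i => by
      rw [← hT, hv, lp.coeFn_smul, Pi.smul_apply, smul_eq_mul]
  have hv0 : Tendsto v atTop (𝓝 0) :=
    Nat.cofinite_eq_atTop ▸ (lp.memℓp v).tendsto_cofinite_zero (by norm_num)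
  obtain ⟨C, hC, r, hr0, hr1, hbd⟩ := DecaysExponentially.of_aeval_seqShift_prod_eq_zero _
    (fun z hz => norm_ne_one_of_mem_roots_bpoly hlam hz) hv0
    (aeval_prod_roots_eq_zero (bpoly_ne_zero hn han) hrec)
  refine ⟨C / r, by positivity, r, hr0, hr1, fun i => (hbd i).trans_eq ?_⟩
  rw [pow_succ]
  field_simp

/-- if `λ ∉ a(𝕋)` and `v ∈ ℓ²` satisfies `T(a) v = λ v`, then `v` decays
exponentially: `|v_i| ≤ C r^i` (1-based indexing; here entry `i : ℕ` is `v_{i+1}`). -/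
theorem stmt_5 (m n : ℕ) (hm : 1 ≤ m) (hn : 1 ≤ n) (a : ℤ → ℂ)
    (ham : a (-(m : ℤ)) ≠ 0) (han : a (n : ℤ) ≠ 0)
    (hsupp : ∀ k : ℤ, (k < -(m : ℤ) ∨ (n : ℤ) < k) → a k = 0)
    (T : ell2 →L[ℂ] ell2)
    (hT : ∀ (v : ell2) (i : ℕ),
      (T v) i = ∑ j ∈ Finset.range (i + n + 1), a ((j : ℤ) - (i : ℤ)) * v j)
    (lam : ℂ) (hlam : lam ∉ aCircle m n a)
    (v : ell2) (hv : T v = lam • v) :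
    ∃ C : ℝ, 0 < C ∧ ∃ r : ℝ, 0 < r ∧ r < 1 ∧
      ∀ i : ℕ, ‖v i‖ ≤ C * r ^ (i + 1) :=
  stmt_5_general m n hn a han hsupp T hT lam hlam v hv
end
end

section
/- Holomorphy of the spectral factor: let Ω ⊆ ℂ ∖ a(𝕋) be open. For λ ∈ Ω let s_λ(z) = ∏ (z − ξ), the product running over the roots ξ of b_λ with |ξ| < 1, counted with multiplicity (a monic polynomial of degree p(λ)). Then for every integer k ≥ 0, the map λ ↦ (coefficient of z^k in s_λ) is holomorphic (complex differentiable) on Ω. -/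
open scoped ENNReal

noncomputable section

/-!
For `λ ∉ a(𝕋)` the polynomial `b_λ` has no zeros on the unit circle, so by the argument
principle the power sums of its zeros inside the disc are contour integrals,
`∑_{|ξ|<1} ξ^j = (2πi)⁻¹ ∮_{|z|=1} z^j b_λ'(z) / b_λ(z) dz`,
whose integrands depend holomorphically (indeed rationally) on `λ`; hence the power sums are
holomorphic. The zeroth power sum is the number of zeros inside the disc, an integer-valued
continuous function, hence locally constant. Newton's identities then express the elementary
symmetric functions of these zeros, i.e. up to sign the coefficients of `s_λ`, polynomially
through the power sums.
-/

open Complex Filter Metric Polynomial Real Topology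

theorem Multiset.mul_esymm_eq_sum {R : Type*} [CommRing R] (s : Multiset R) (k : ℕ) :
    k * s.esymm k = (-1) ^ (k + 1) * ∑ a ∈ Finset.HasAntidiagonal.antidiagonal k with a.1 < k,
      (-1) ^ a.1 * s.esymm a.1 * (s.map (· ^ a.2)).sum := by
  have key := congrArg (MvPolynomial.aeval s.toList.get)
    (MvPolynomial.mul_esymm_eq_sum (Fin s.toList.length) R k)
  have enum : (Finset.univ : Finset (Fin s.toList.length)).val.map s.toList.get = s := by
    rw [show (Finset.univ : Finset (Fin s.toList.length)).val = List.finRange s.toList.length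
      from rfl, Multiset.map_coe, List.map_get_finRange, Multiset.coe_toList]
  have psum_eq (j : ℕ) : ∑ i, s.toList.get i ^ j = (s.map (· ^ j)).sum := by
    conv_rhs => rw [← enum, Multiset.map_map]
    rfl
  simpa only [map_mul, map_sum, map_pow, map_neg, map_one, map_natCast,
    MvPolynomial.aeval_esymm_eq_multiset_esymm, MvPolynomial.psum, MvPolynomial.aeval_X, enum,
    psum_eq] using key

theorem Multiset.sum_map_ite {α M : Type*} [AddCommMonoid M] (p : α → Prop) [DecidablePred p]
    (f g : α → M) (s : Multiset α) :
    (s.map fun a => if p a then f a else g a).sum =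
      ((s.filter p).map f).sum + ((s.filter fun a => ¬p a).map g).sum :=
  Quot.inductionOn s fun l => by simpa using List.sum_map_ite p f g l

section SymmetricFunctions

variable {𝕜 E : Type*} [RCLike 𝕜] [NormedAddCommGroup E] [NormedSpace 𝕜 E]
  {t : E → Multiset 𝕜} {U : Set E}

theorem differentiableOn_esymm_of_differentiableOn_powerSum
    (ht : ∀ j, DifferentiableOn 𝕜 (fun x => ((t x).map (· ^ j)).sum) U) (k : ℕ) :
    DifferentiableOn 𝕜 (fun x => (t x).esymm k) U := by
  induction k using Nat.strong_induction_on with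
  | _ k ih =>
    rcases k with _ | k
    · simp [Multiset.esymm, Multiset.powersetCard_zero_left]
    · have hrhs : DifferentiableOn 𝕜 (fun x => ((k + 1 : ℕ) : 𝕜)⁻¹ * ((-1) ^ (k + 1 + 1) *
          ∑ a ∈ Finset.HasAntidiagonal.antidiagonal (k + 1) with a.1 < k + 1,
            (-1) ^ a.1 * (t x).esymm a.1 * ((t x).map (· ^ a.2)).sum)) U :=
        ((DifferentiableOn.fun_sum fun a ha =>
          ((ih a.1 (Finset.mem_filter.1 ha).2).const_mul _).mul (ht a.2)).const_mul _).const_mul _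
      refine hrhs.congr fun x _ => ?_
      rw [← Multiset.mul_esymm_eq_sum, inv_mul_cancel_left₀ (Nat.cast_ne_zero.2 k.succ_ne_zero)]

theorem eventually_eq_of_continuousAt_natCast {X : Type*} [TopologicalSpace X] {f : X → ℕ}
    {x₀ : X} (hf : ContinuousAt (fun x => (f x : 𝕜)) x₀) : ∀ᶠ x in 𝓝 x₀, f x = f x₀ := by
  have hre : ContinuousAt (Nat.cast ∘ f : X → ℝ) x₀ := by
    simpa [Function.comp_def] using RCLike.continuous_re.continuousAt.comp hf
  have hf' := Nat.isClosedEmbedding_coe_real.isEmbedding.continuousAt_iff.2 hre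
  rw [ContinuousAt, nhds_discrete ℕ] at hf'
  exact tendsto_pure.1 hf'

theorem differentiableOn_coeff_prod_X_sub_C (hU : IsOpen U)
    (ht : ∀ j, DifferentiableOn 𝕜 (fun x => ((t x).map (· ^ j)).sum) U) (k : ℕ) :
    DifferentiableOn 𝕜 (fun x => ((t x).map fun ξ => X - C ξ).prod.coeff k) U := by
  intro x₀ hx₀
  set r := Multiset.card (t x₀)
  have hcard : ∀ᶠ x in 𝓝 x₀, Multiset.card (t x) = r :=
    eventually_eq_of_continuousAt_natCast (𝕜 := 𝕜) <| by
      simpa using (ht 0).continuousOn.continuousAt (hU.mem_nhds hx₀)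
  refine DifferentiableAt.differentiableWithinAt ?_
  by_cases hk : k ≤ r
  · have hesymm := (differentiableOn_esymm_of_differentiableOn_powerSum ht (r - k)).differentiableAt
      (hU.mem_nhds hx₀)
    refine (hesymm.const_mul ((-1) ^ (r - k))).congr_of_eventuallyEq ?_
    filter_upwards [hcard] with x hx
    rw [Multiset.prod_X_sub_C_coeff _ (hx ▸ hk), hx]
  · refine (differentiableAt_const 0).congr_of_eventuallyEq ?_
    filter_upwards [hcard] with x hx
    exact coeff_eq_zero_of_natDegree_lt (by rw [natDegree_multiset_prod_X_sub_C_eq_card, hx]; omega)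

end SymmetricFunctions

section ArgumentPrinciple

theorem circleIntegral_multiset_sum {ι E : Type*} [NormedAddCommGroup E] [NormedSpace ℂ E]
    {c : ℂ} {R : ℝ} {s : Multiset ι} {f : ι → ℂ → E}
    (hf : ∀ i ∈ s, ContinuousOn (f i) (sphere c |R|)) :
    (∮ z in C(c, R), (s.map fun i => f i z).sum) = (s.map fun i => ∮ z in C(c, R), f i z).sum := by
  induction s using Multiset.induction_on with
  | empty => simp [circleIntegral]
  | cons i s ih =>
    have hs : ∀ j ∈ s, ContinuousOn (f j) (sphere c |R|) := fun j hj => hf j (s.mem_cons_of_mem hj)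
    simp only [Multiset.map_cons, Multiset.sum_cons]
    rw [circleIntegral.integral_add (hf i (s.mem_cons_self i)).circleIntegrable'
      (continuousOn_multiset_sum _ hs).circleIntegrable', ih hs]

theorem continuousOn_mul_inv_sub {f : ℂ → ℂ} (hf : Continuous f) {s : Set ℂ} {ξ : ℂ}
    (hξ : ξ ∉ s) : ContinuousOn (fun z => f z * (z - ξ)⁻¹) s :=
  hf.continuousOn.mul <| ContinuousOn.inv₀ (by fun_prop) fun z hz h => hξ (sub_eq_zero.1 h ▸ hz)

theorem circleIntegral_mul_inv_sub_of_differentiable {f : ℂ → ℂ} (hf : Differentiable ℂ f)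
    {c ξ : ℂ} {R : ℝ} [Decidable (ξ ∈ ball c R)] (hR : 0 ≤ R) (hξ : ξ ∉ sphere c R) :
    (∮ z in C(c, R), f z * (z - ξ)⁻¹) = if ξ ∈ ball c R then 2 * π * I * f ξ else 0 := by
  split_ifs with hball
  · simpa [mul_comm] using hf.diffContOnCl.circleIntegral_sub_inv_smul hball
  · have hout : ξ ∉ closedBall c R := by
      rw [← ball_union_sphere]
      exact fun h => h.elim hball hξ
    refine circleIntegral_eq_zero_of_differentiable_on_off_countable hR Set.countable_empty
      (continuousOn_mul_inv_sub hf.continuous hout) fun z hz => ?_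
    exact (hf z).mul ((differentiableAt_id.sub_const ξ).inv
      (sub_ne_zero.2 fun h => hout (h ▸ ball_subset_closedBall hz.1)))

theorem circleIntegral_mul_eval_derivative_div_eval {P : ℂ[X]} {f : ℂ → ℂ}
    (hf : Differentiable ℂ f) {c : ℂ} {R : ℝ} [DecidablePred (· ∈ ball c R)] (hR : 0 ≤ R)
    (hP : ∀ z ∈ sphere c R, P.eval z ≠ 0) :
    (∮ z in C(c, R), f z * (P.derivative.eval z / P.eval z)) =
      2 * π * I * ((P.roots.filter (· ∈ ball c R)).map f).sum := by
  have hroots : ∀ ξ ∈ P.roots, ξ ∉ sphere c R := fun ξ hξ hs => hP ξ hs (isRoot_of_mem_roots hξ)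
  calc (∮ z in C(c, R), f z * (P.derivative.eval z / P.eval z))
      = ∮ z in C(c, R), (P.roots.map fun ξ => f z * (z - ξ)⁻¹).sum :=
        circleIntegral.integral_congr hR fun z hz => by
          simp [(IsAlgClosed.splits P).eval_derivative_div_eval_of_ne_zero (hP z hz),
            Multiset.sum_map_mul_left]
    _ = (P.roots.map fun ξ => if ξ ∈ ball c R then 2 * π * I * f ξ else 0).sum := by
        rw [circleIntegral_multiset_sum fun ξ hξ => ?_]
        · exact congrArg _ (Multiset.map_congr rfl fun ξ hξ =>
            circleIntegral_mul_inv_sub_of_differentiable hf hR (hroots ξ hξ))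
        · rw [abs_of_nonneg hR]
          exact continuousOn_mul_inv_sub hf.continuous (hroots ξ hξ)
    _ = 2 * π * I * ((P.roots.filter (· ∈ ball c R)).map f).sum := by
        simp [Multiset.sum_map_ite, Multiset.sum_map_mul_left]

end ArgumentPrinciple

section ParametricIntegrals

variable {U : Set ℂ} {c : ℂ} {R : ℝ}

theorem differentiableOn_circleIntegral_of_hasDerivAt {E : Type*} [NormedAddCommGroup E]
    [NormedSpace ℂ E] {f f' : ℂ → ℂ → E} (hU : IsOpen U)
    (hf : ContinuousOn (Function.uncurry f) (U ×ˢ sphere c |R|))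
    (hf' : ContinuousOn (Function.uncurry f') (U ×ˢ sphere c |R|))
    (hderiv : ∀ w ∈ U, ∀ z ∈ sphere c |R|, HasDerivAt (f · z) (f' w z) w) :
    DifferentiableOn ℂ (fun w => ∮ z in C(c, R), f w z) U := by
  intro w₀ hw₀
  obtain ⟨ε, hε, hball⟩ := nhds_basis_closedBall.mem_iff.1 (hU.mem_nhds hw₀)
  have hball' : ball w₀ ε ⊆ U := ball_subset_closedBall.trans hball
  have hcont {g : ℂ → ℂ → E} (hg : ContinuousOn (Function.uncurry g) (U ×ˢ sphere c |R|))
      {w : ℂ} (hw : w ∈ U) :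
      Continuous fun θ => deriv (circleMap c R) θ • g w (circleMap c R θ) := by
    simp only [deriv_circleMap]
    exact (by fun_prop : Continuous fun θ => circleMap 0 R θ * I).smul
      (hg.comp_continuous (f := fun θ => (w, circleMap c R θ)) (by fun_prop)
        fun θ => ⟨hw, circleMap_mem_sphere' c R θ⟩)
  have hK := (isCompact_closedBall w₀ ε).prod (isCompact_sphere c |R|)
  obtain ⟨M, hM⟩ := hK.exists_bound_of_continuousOn (hf'.mono (Set.prod_mono hball subset_rfl))
  refine (intervalIntegral.hasDerivAt_integral_of_dominated_loc_of_deriv_le (a := 0) (b := 2 * π)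
    (bound := fun _ => |R| * M)
    (F' := fun w θ => deriv (circleMap c R) θ • f' w (circleMap c R θ)) (ball_mem_nhds w₀ hε)
    ?_ ((hcont hf hw₀).intervalIntegrable _ _) (hcont hf' hw₀).aestronglyMeasurable ?_
    intervalIntegrable_const ?_).2.differentiableAt.differentiableWithinAt
  · filter_upwards [ball_mem_nhds w₀ hε] with w hw
    exact (hcont hf (hball' hw)).aestronglyMeasurable
  · refine .of_forall fun θ _ w hw => ?_
    rw [norm_smul, deriv_circleMap, norm_mul, norm_circleMap_zero, norm_I, mul_one]
    exact mul_le_mul_of_nonneg_left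
      (hM (w, circleMap c R θ) ⟨ball_subset_closedBall hw, circleMap_mem_sphere' c R θ⟩)
      (abs_nonneg R)
  · exact .of_forall fun θ _ w hw =>
      (hderiv w (hball' hw) _ (circleMap_mem_sphere' c R θ)).const_smul _

theorem differentiableOn_circleIntegral_eval_derivative_div_eval (A B : ℂ[X]) (hU : IsOpen U)
    (hne : ∀ w ∈ U, ∀ z ∈ sphere c |R|, (A - C w * B).eval z ≠ 0) {g : ℂ → ℂ}
    (hg : Continuous g) :
    DifferentiableOn ℂ (fun w => ∮ z in C(c, R),
      g z * ((A - C w * B).derivative.eval z / (A - C w * B).eval z)) U := by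
  simp only [derivative_sub, derivative_C_mul, eval_sub, eval_mul, eval_C] at hne ⊢
  refine differentiableOn_circleIntegral_of_hasDerivAt hU (f' := fun w z => g z *
    ((-(B.derivative.eval z) * (A.eval z - w * B.eval z) -
      (A.derivative.eval z - w * B.derivative.eval z) * -(B.eval z)) /
        (A.eval z - w * B.eval z) ^ 2))
    ?_ ?_ fun w hw z hz => ?_
  · exact ContinuousOn.mul (by fun_prop) <| ContinuousOn.div (by fun_prop) (by fun_prop)
      fun p hp => hne p.1 hp.1 p.2 hp.2
  · exact ContinuousOn.mul (by fun_prop) <| ContinuousOn.div (by fun_prop) (by fun_prop)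
      fun p hp => pow_ne_zero 2 (hne p.1 hp.1 p.2 hp.2)
  · have hlin (P Q : ℂ[X]) : HasDerivAt (fun w => P.eval z - w * Q.eval z) (-(Q.eval z)) w := by
      simpa using ((hasDerivAt_id w).mul_const (Q.eval z)).const_sub (P.eval z)
    exact ((hlin _ _).div (hlin _ _) (hne w hw z hz)).const_mul (g z)

end ParametricIntegrals

section LaurentSymbol

variable (m n : ℕ) (a : ℤ → ℂ)

theorem bpoly_eq_sub (lam : ℂ) : bpoly m n a lam = bpoly m n a 0 - C lam * X ^ m := by
  simp [bpoly]

theorem eval_bpoly {z : ℂ} (hz : z ≠ 0) (lam : ℂ) :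
    (bpoly m n a lam).eval z = z ^ m * (aval m n a z - lam) := by
  have hsum : ∑ k ∈ Finset.range (m + n + 1), a ((k : ℤ) - m) * z ^ k = z ^ m * aval m n a z := by
    rw [aval, Finset.mul_sum]
    refine Finset.sum_nbij' (fun k => (k : ℤ) - m) (fun i => (i + m).toNat) ?_ ?_ ?_ ?_
      fun k _ => ?_
    iterate 4 (intro k hk; simp only [Finset.mem_range, Finset.mem_Icc] at hk ⊢; omega)
    rw [mul_left_comm, ← zpow_natCast z m, ← zpow_add₀ hz, ← zpow_natCast]
    congr 2; omega
  simp only [bpoly, eval_sub, eval_finsetSum, eval_mul, eval_C, eval_pow, eval_X, hsum]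
  ring

theorem eval_bpoly_ne_zero {lam : ℂ} (hlam : lam ∉ aCircle m n a) {z : ℂ}
    (hz : z ∈ sphere 0 1) : (bpoly m n a lam).eval z ≠ 0 := by
  have hz' : ‖z‖ = 1 := mem_sphere_zero_iff_norm.1 hz
  have hz0 : z ≠ 0 := ne_zero_of_mem_unit_sphere ⟨z, hz⟩
  rw [eval_bpoly m n a hz0]
  exact mul_ne_zero (pow_ne_zero m hz0) (sub_ne_zero.2 fun h => hlam ⟨z, hz', h⟩)

theorem isOpen_compl_aCircle : IsOpen (aCircle m n a)ᶜ := by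
  have himage : aCircle m n a = aval m n a '' sphere 0 1 := by
    ext w
    simp [aCircle]
  rw [isOpen_compl_iff, himage]
  refine ((isCompact_sphere 0 1).image_of_continuousOn ?_).isClosed
  refine continuousOn_finsetSum _ fun k _ => continuousOn_const.mul ?_
  exact ContinuousOn.zpow₀ continuousOn_id k fun z hz => Or.inl (ne_zero_of_mem_unit_sphere ⟨z, hz⟩)

end LaurentSymbol

theorem stmt_17_general (m n : ℕ) (a : ℤ → ℂ)
    (Ω : Set ℂ) (hΩ : Ω ⊆ (aCircle m n a)ᶜ) (k : ℕ) :
    DifferentiableOn ℂ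
      (fun lam : ℂ =>
        ((((bpoly m n a lam).roots.filter fun z => ‖z‖ < 1).map
          (fun ξ : ℂ => Polynomial.X - Polynomial.C ξ)).prod).coeff k) Ω := by
  classical
  have hU := isOpen_compl_aCircle m n a
  refine (differentiableOn_coeff_prod_X_sub_C hU (fun j => ?_) k).mono hΩ
  have hne (lam : ℂ) (hlam : lam ∈ (aCircle m n a)ᶜ) (z : ℂ) (hz : z ∈ sphere 0 1) :
      (bpoly m n a 0 - C lam * X ^ m).eval z ≠ 0 := by
    rw [← bpoly_eq_sub]
    exact eval_bpoly_ne_zero m n a hlam hz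
  have hint := differentiableOn_circleIntegral_eval_derivative_div_eval (c := 0) (R := 1)
    (bpoly m n a 0) (X ^ m) hU
    (by simpa using hne) (continuous_pow j)
  refine (hint.const_mul (2 * π * I)⁻¹).congr fun lam hlam => ?_
  simp only [← bpoly_eq_sub]
  rw [circleIntegral_mul_eval_derivative_div_eval (differentiable_pow j) zero_le_one
    fun z hz => eval_bpoly_ne_zero m n a hlam hz, inv_mul_cancel_left₀ two_pi_I_ne_zero]
  exact congrArg _ (congrArg _ (Multiset.filter_congr fun ξ _ => mem_ball_zero_iff.symm))

/-- holomorphy of the spectral factor: on an open set `Ω ⊆ ℂ ∖ a(𝕋)`, each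
coefficient of the monic factor `s_λ(z) = ∏_{|ξ|<1, b_λ(ξ)=0} (z − ξ)` (roots counted with
multiplicity) depends holomorphically on `λ`. -/
theorem stmt_17 (m n : ℕ) (hm : 1 ≤ m) (hn : 1 ≤ n) (a : ℤ → ℂ)
    (ham : a (-(m : ℤ)) ≠ 0) (han : a (n : ℤ) ≠ 0)
    (hsupp : ∀ k : ℤ, (k < -(m : ℤ) ∨ (n : ℤ) < k) → a k = 0)
    (Ω : Set ℂ) (hΩopen : IsOpen Ω) (hΩ : Ω ⊆ (aCircle m n a)ᶜ) (k : ℕ) :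
    DifferentiableOn ℂ
      (fun lam : ℂ =>
        ((((bpoly m n a lam).roots.filter fun z => ‖z‖ < 1).map
          (fun ξ : ℂ => Polynomial.X - Polynomial.C ξ)).prod).coeff k) Ω :=
  stmt_17_general m n a Ω hΩ k
end
end
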